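/- Let n ≥ 1 and let (X_i)_{i∈I} be a family of path-connected Hausdorff topological spaces such that the set of indices i ∈ I for which there exists an essential continuous map S^n → X_i is infinite. Then every point of the product Π_{i∈I} X_i (with the product topology) is a π_n-wild point of Π_{i∈I} X_i; that is, the product is perfectly π_n-wild. -/

import Mathlib

open Filter Topology

/-- The unit `n`-sphere in `ℝ^(n+1)`. -/
abbrev Sph (n : ℕ) : Type :=
  Metric.sphere (0 : EuclideanSpace ℝ (Fin (n + 1))) 1

/-- The basepoint `s₀ = (1,0,…,0)` of the unit `n`-sphere. -/
noncomputable def spherePt (n : ℕ) : Sph n :=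
  ⟨EuclideanSpace.single 0 1, by
    simp [mem_sphere_zero_iff_norm, EuclideanSpace.norm_single]⟩

/-- A continuous map `S^n → X` is essential if it is not homotopic to a constant map. -/
def Essential {n : ℕ} {X : Type*} [TopologicalSpace X] (f : C(Sph n, X)) : Prop :=
  ∀ x : X, ¬ f.Homotopic (ContinuousMap.const (Sph n) x)

/-- `x` is a `π_n`-wild point of `X` if there is a sequence of essential maps
`S^n → X` based at `x` converging to the constant map at `x` in the compact-open
topology. -/
def IsWildPoint (n : ℕ) {X : Type*} [TopologicalSpace X] (x : X) : Prop :=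
  ∃ f : ℕ → C(Sph n, X),
    (∀ k, f k (spherePt n) = x) ∧
    (∀ k, Essential (f k)) ∧
    Tendsto f atTop (𝓝 (ContinuousMap.const (Sph n) x))

/-- The `π_n`-wild set of `X`. -/
def wildSet (n : ℕ) (X : Type*) [TopologicalSpace X] : Set X :=
  {x | IsWildPoint n x}

/-- A continuous map is `π_n`-injective if precomposition reflects inessentiality. -/
def PiNInjective (n : ℕ) {X Y : Type*} [TopologicalSpace X] [TopologicalSpace Y]
    (f : C(X, Y)) : Prop :=
  ∀ g : C(Sph n, X),
    (∃ y : Y, (f.comp g).Homotopic (ContinuousMap.const (Sph n) y)) →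
    ∃ x : X, g.Homotopic (ContinuousMap.const (Sph n) x)

/-- `X` is `π_n`-rigid at `x`. -/
def IsRigidAt (n : ℕ) {X : Type*} [TopologicalSpace X] (x : X) : Prop :=
  ∃ f : ℕ → C(Sph n, X),
    (∀ k, f k (spherePt n) = x) ∧
    (∀ k, Essential (f k)) ∧
    Tendsto f atTop (𝓝 (ContinuousMap.const (Sph n) x)) ∧
    ∀ β : C(unitInterval, X), β 0 = x →
      ∀ H : ℕ → C(Sph n × unitInterval, X),
        (∀ k s, H k (s, 0) = f k s) →
        (∀ k t, H k (spherePt n, t) = β t) →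
        Tendsto H atTop (𝓝 (β.comp (ContinuousMap.snd (α := Sph n)))) →
        β 1 = x

/-! Choose infinitely many distinct factors `X i_k` carrying an essential `n`-sphere. Since each
factor is path connected, an essential map can be replaced by a homotopic one based at `x i_k`:
precompose it with a self-map of the sphere that is homotopic to the identity and collapses a
closed hemisphere onto the basepoint, then fill that hemisphere with a path to `x i_k`. Inserting
the `k`-th such map into coordinate `i_k` of the constant map at `x` gives essential maps (project
back to `X i_k`), and they converge to the constant map because a basic neighbourhood of `x`
constrains only finitely many coordinates. -/

open scoped RealInnerProductSpace
open Metric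

noncomputable section

section Antipodal

variable {E : Type*} [NormedAddCommGroup E] [NormedSpace ℝ E]

lemma eq_neg_of_sub_smul_add_smul_eq_zero {a b : E} (ha : ‖a‖ = 1) (hb : ‖b‖ = 1) {t : ℝ}
    (h : (1 - t) • a + t • b = 0) : a = -b := by
  have hab : (1 - t) • a = -(t • b) := eq_neg_of_add_eq_zero_left h
  have habs : |1 - t| = |t| := by simpa [norm_smul, ha, hb] using congrArg norm hab
  obtain rfl : t = 1 / 2 := by
    have := congrArg (· ^ 2) habs
    simp only [sq_abs] at this
    linarith
  norm_num at hab
  rwa [← smul_neg, smul_right_inj (by norm_num)] at hab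

theorem ContinuousMap.homotopic_of_forall_ne_neg {Y : Type*} [TopologicalSpace Y]
    {f g : C(Y, sphere (0 : E) 1)} (h : ∀ y, f y ≠ -g y) : f.Homotopic g := by
  let v : unitInterval × Y → E := fun p => (1 - (p.1 : ℝ)) • (f p.2 : E) + (p.1 : ℝ) • g p.2
  have hv : ∀ p, v p ≠ 0 := fun p hp =>
    h p.2 <| Subtype.ext <| eq_neg_of_sub_smul_add_smul_eq_zero (norm_eq_of_mem_sphere _)
      (norm_eq_of_mem_sphere _) hp
  have hcont : Continuous v := by fun_prop
  refine ⟨{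
    toFun := fun p => ⟨NormedSpace.normalize (v p), by simpa using hv p⟩
    continuous_toFun := ?_
    map_zero_left := fun y => Subtype.ext ?_
    map_one_left := fun y => Subtype.ext ?_ }⟩
  · exact ((continuous_norm.comp hcont).inv₀ fun p => norm_ne_zero_iff.mpr (hv p)).smul hcont
      |>.subtype_mk _
  · simp [v, NormedSpace.normalize_eq_self_of_norm_eq_one]
  · simp [v, NormedSpace.normalize_eq_self_of_norm_eq_one]

end Antipodal

section Collapse

variable {E : Type*} [NormedAddCommGroup E] [InnerProductSpace ℝ E]

/-- For a unit vector `e`, this sends the closed hemisphere `0 ≤ ⟪e, s⟫` to `e` and stretches the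
latitude `u ∈ [-1, 0]` of the other one to `2u + 1`; the square root rescales the component
orthogonal to `e` so that the unit sphere is preserved. -/
def collapseCap (e s : E) : E :=
  (2 * min ⟪e, s⟫ 0 + 1) • e +
    √(-4 * min ⟪e, s⟫ 0 / (1 - min ⟪e, s⟫ 0)) • (s - ⟪e, s⟫ • e)

lemma continuous_collapseCap (e : E) : Continuous (collapseCap e) := by
  have hu : Continuous fun s : E => min ⟪e, s⟫ 0 := by fun_prop
  have hden : ∀ s : E, 1 - min ⟪e, s⟫ 0 ≠ 0 := fun s => by
    have := min_le_right ⟪e, s⟫ 0; linarith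
  unfold collapseCap
  exact ((continuous_const.mul hu).add continuous_const).smul continuous_const |>.add <|
    ((continuous_const.mul hu).div (continuous_const.sub hu) hden).sqrt.smul (by fun_prop)

lemma collapseCap_of_nonneg {e s : E} (h : 0 ≤ ⟪e, s⟫) : collapseCap e s = e := by
  simp [collapseCap, min_eq_right h]

variable {e s : E}

lemma inner_sub_inner_smul_eq_zero (he : ‖e‖ = 1) : ⟪e, s - ⟪e, s⟫ • e⟫ = 0 := by
  rw [inner_sub_right, real_inner_smul_right, real_inner_self_eq_norm_sq, he]; ring

lemma inner_collapseCap (hs : ‖s‖ = 1) :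
    ⟪s, collapseCap e s⟫ = (2 * min ⟪e, s⟫ 0 + 1) * ⟪e, s⟫ +
      √(-4 * min ⟪e, s⟫ 0 / (1 - min ⟪e, s⟫ 0)) * (1 - ⟪e, s⟫ ^ 2) := by
  simp only [collapseCap, inner_add_right, inner_sub_right, real_inner_smul_right,
    real_inner_comm e s, real_inner_self_eq_norm_sq, hs]
  ring

lemma norm_collapseCap (he : ‖e‖ = 1) (hs : ‖s‖ = 1) : ‖collapseCap e s‖ = 1 := by
  set u := ⟪e, s⟫
  set w := s - u • e
  have hew : ⟪u • e, w⟫ = 0 := by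
    rw [real_inner_smul_left, inner_sub_inner_smul_eq_zero he, mul_zero]
  have hw : ‖w‖ ^ 2 = 1 - u ^ 2 := by
    have := norm_add_sq_eq_norm_sq_add_norm_sq_real hew
    rw [add_sub_cancel, hs, norm_smul, he, Real.norm_eq_abs] at this
    nlinarith [sq_abs u]
  have hden : 0 < 1 - min u 0 := by linarith [min_le_right u 0]
  have hc : √(-4 * min u 0 / (1 - min u 0)) ^ 2 = -4 * min u 0 / (1 - min u 0) :=
    Real.sq_sqrt (div_nonneg (by linarith [min_le_right u 0]) hden.le)
  have hsq : ‖collapseCap e s‖ ^ 2 = 1 := by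
    have hort : ⟪(2 * min u 0 + 1) • e, √(-4 * min u 0 / (1 - min u 0)) • w⟫ = 0 := by
      rw [real_inner_smul_left, real_inner_smul_right, inner_sub_inner_smul_eq_zero he]; ring
    have := norm_add_sq_eq_norm_sq_add_norm_sq_real hort
    change ‖(2 * min u 0 + 1) • e + √(-4 * min u 0 / (1 - min u 0)) • w‖ ^ 2 = 1
    rw [sq, this, norm_smul, norm_smul, he, Real.norm_eq_abs,
      Real.norm_eq_abs, ← sq, ← sq, mul_pow, mul_pow, sq_abs, sq_abs, hc, hw]
    rcases le_total u 0 with hu | hu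
    · rw [min_eq_left hu] at hden ⊢
      field_simp
      ring
    · simp [min_eq_right hu]
  nlinarith [norm_nonneg (collapseCap e s)]

lemma collapseCap_ne_neg (he : ‖e‖ = 1) (hs : ‖s‖ = 1) : collapseCap e s ≠ -s := by
  intro h
  have habs : |⟪e, s⟫| ≤ 1 := by simpa [he, hs] using abs_real_inner_le_norm e s
  have hinner := inner_collapseCap (e := e) hs
  rw [h, inner_neg_right, real_inner_self_eq_norm_sq, hs] at hinner
  have hrest : 0 ≤ √(-4 * min ⟪e, s⟫ 0 / (1 - min ⟪e, s⟫ 0)) * (1 - ⟪e, s⟫ ^ 2) :=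
    mul_nonneg (Real.sqrt_nonneg _) (by nlinarith [abs_le.mp habs])
  rcases le_total ⟪e, s⟫ 0 with hu | hu
  · rw [min_eq_left hu] at hinner hrest; nlinarith
  · rw [min_eq_right hu] at hinner hrest; nlinarith

end Collapse

section SphereMaps

variable {E : Type*} [NormedAddCommGroup E] [InnerProductSpace ℝ E]

def collapseCapMap (e : sphere (0 : E) 1) : C(sphere (0 : E) 1, sphere (0 : E) 1) where
  toFun s := ⟨collapseCap e s, mem_sphere_zero_iff_norm.mpr <|
    norm_collapseCap (norm_eq_of_mem_sphere e) (norm_eq_of_mem_sphere s)⟩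
  continuous_toFun := ((continuous_collapseCap _).comp continuous_subtype_val).subtype_mk _

lemma collapseCapMap_of_nonneg {e s : sphere (0 : E) 1} (h : 0 ≤ ⟪(e : E), s⟫) :
    collapseCapMap e s = e :=
  Subtype.ext (collapseCap_of_nonneg h)

lemma collapseCapMap_homotopic_id (e : sphere (0 : E) 1) :
    (collapseCapMap e).Homotopic (ContinuousMap.id _) :=
  ContinuousMap.homotopic_of_forall_ne_neg fun s h =>
    collapseCap_ne_neg (norm_eq_of_mem_sphere e) (norm_eq_of_mem_sphere s)
      (congrArg Subtype.val h)

variable {X : Type*} [TopologicalSpace X] (e : sphere (0 : E) 1) (g : C(sphere (0 : E) 1, X))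
  {x : X} (γ : Path (g e) x)

def attachPath : C(sphere (0 : E) 1, X) where
  toFun s := if ⟪(e : E), s⟫ ≤ 0 then g (collapseCapMap e s) else γ.extend ⟪(e : E), s⟫
  continuous_toFun := by
    refine Continuous.if_le (by fun_prop) (γ.continuous_extend.comp (by fun_prop)) (by fun_prop)
      continuous_const fun s hs => ?_
    rw [collapseCapMap_of_nonneg hs.ge, hs, Path.extend_zero]

lemma attachPath_apply_self : attachPath e g γ e = x := by
  simp [attachPath]

def attachPathHomotopy : (attachPath e g γ).Homotopy (g.comp (collapseCapMap e)) where
  toFun p := if ⟪(e : E), p.2⟫ ≤ 0 then g (collapseCapMap e p.2)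
    else γ.extend ((1 - (p.1 : ℝ)) * ⟪(e : E), p.2⟫)
  continuous_toFun := by
    refine Continuous.if_le (by fun_prop) (γ.continuous_extend.comp (by fun_prop)) (by fun_prop)
      continuous_const fun p hp => ?_
    rw [collapseCapMap_of_nonneg hp.ge, hp, mul_zero, Path.extend_zero]
  map_zero_left s := by simp [attachPath]
  map_one_left s := by
    rcases le_or_gt ⟪(e : E), s⟫ 0 with h | h
    · simp [h]
    · simp [h.not_ge, collapseCapMap_of_nonneg h.le]

lemma attachPath_homotopic : (attachPath e g γ).Homotopic g := by
  simpa using ContinuousMap.Homotopic.trans ⟨attachPathHomotopy e g γ⟩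
    ((ContinuousMap.Homotopic.refl g).comp (collapseCapMap_homotopic_id e))

end SphereMaps

section Essential

variable {n : ℕ} {X Y : Type*} [TopologicalSpace X] [TopologicalSpace Y]

lemma Essential.of_homotopic {f g : C(Sph n, X)} (hfg : f.Homotopic g) (hg : Essential g) :
    Essential f :=
  fun x hx => hg x (hfg.symm.trans hx)

lemma Essential.of_comp (g : C(X, Y)) {f : C(Sph n, X)} (h : Essential (g.comp f)) :
    Essential f :=
  fun x hx => h (g x) ((ContinuousMap.Homotopic.refl g).comp hx)

lemma exists_essential_apply_eq [PathConnectedSpace X] (h : ∃ g : C(Sph n, X), Essential g)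
    (x : X) : ∃ f : C(Sph n, X), Essential f ∧ f (spherePt n) = x := by
  obtain ⟨g, hg⟩ := h
  let γ := (PathConnectedSpace.joined (g (spherePt n)) x).somePath
  exact ⟨attachPath (spherePt n) g γ, hg.of_homotopic (attachPath_homotopic _ g γ),
    attachPath_apply_self _ g γ⟩

end Essential

namespace ContinuousMap

variable {α I Y : Type*} [TopologicalSpace Y] {X : I → Type*} [∀ i, TopologicalSpace (X i)]

lemma tendsto_nhds_const_of_eventually_forall_mem {Z : Type*} [TopologicalSpace Z]
    {l : Filter α} {F : α → C(Y, Z)} {z : Z} (h : ∀ U ∈ 𝓝 z, ∀ᶠ a in l, ∀ y, F a y ∈ U) :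
    Tendsto F l (𝓝 (const Y z)) := by
  rw [tendsto_nhds_compactOpen]
  intro K _ U hU hKU
  rcases K.eq_empty_or_nonempty with rfl | ⟨y, hy⟩
  · exact .of_forall fun _ => Set.mapsTo_empty _ _
  · filter_upwards [h U (hU.mem_nhds (hKU hy))] with a ha
    exact fun y _ => ha y

variable [DecidableEq I]

def update (x : ∀ i, X i) (i : I) (f : C(Y, X i)) : C(Y, ∀ j, X j) :=
  ⟨fun y => Function.update x i (f y), by fun_prop⟩

lemma eval_comp_update (x : ∀ i, X i) (i : I) (f : C(Y, X i)) :
    (eval i).comp (update x i f) = f := by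
  ext; simp [update]

lemma tendsto_update_nhds_const (x : ∀ i, X i) {l : Filter α} {ι : α → I}
    (hι : Tendsto ι l cofinite) (f : ∀ a, C(Y, X (ι a))) :
    Tendsto (fun a => update x (ι a) (f a)) l (𝓝 (const Y x)) := by
  refine tendsto_nhds_const_of_eventually_forall_mem fun U hU => ?_
  obtain ⟨J, t, ht, hJU⟩ := Filter.mem_pi'.mp (nhds_pi (a := x) ▸ hU)
  filter_upwards [hι.eventually (J.finite_toSet.eventually_cofinite_notMem)] with a ha y
  refine hJU fun j hj => ?_
  rw [update, coe_mk, Function.update_of_ne (ne_of_mem_of_not_mem hj ha)]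
  exact mem_of_mem_nhds (ht j)

end ContinuousMap

lemma Essential.update {n : ℕ} {I : Type*} [DecidableEq I] {X : I → Type*}
    [∀ i, TopologicalSpace (X i)] (x : ∀ i, X i) {i : I} {f : C(Sph n, X i)} (hf : Essential f) :
    Essential (ContinuousMap.update x i f) :=
  .of_comp (ContinuousMap.eval i) (by rwa [ContinuousMap.eval_comp_update])

theorem stmt11_general {I : Type*} (n : ℕ) (X : I → Type*)
    [∀ i, TopologicalSpace (X i)] [∀ i, PathConnectedSpace (X i)]
    (hinf : {i : I | ∃ g : C(Sph n, X i), Essential g}.Infinite) :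
    ∀ x : ∀ i, X i, IsWildPoint n x := by
  classical
  intro x
  let ι : ℕ → I := fun k => hinf.natEmbedding _ k
  have hι : Function.Injective ι := Subtype.val_injective.comp (hinf.natEmbedding _).injective
  choose f hf hfx using fun k => exists_essential_apply_eq (hinf.natEmbedding _ k).2 (x (ι k))
  refine ⟨fun k => ContinuousMap.update x (ι k) (f k), fun k => ?_, fun k => (hf k).update x, ?_⟩
  · simp [ContinuousMap.update, hfx]
  · rw [← Nat.cofinite_eq_atTop]
    exact ContinuousMap.tendsto_update_nhds_const x hι.tendsto_cofinite f

/-- a product with infinitely many factors admitting essential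
maps `S^n → X_i` is perfectly `π_n`-wild. -/
theorem stmt11 {I : Type*} (n : ℕ) (hn : 1 ≤ n) (X : I → Type*)
    [∀ i, TopologicalSpace (X i)] [∀ i, T2Space (X i)] [∀ i, PathConnectedSpace (X i)]
    (hinf : {i : I | ∃ g : C(Sph n, X i), Essential g}.Infinite) :
    ∀ x : ∀ i, X i, IsWildPoint n x :=
  stmt11_general n X hinf
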